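/- Let A be a finite nonempty alphabet, E ⊆ W(A), and 𝐬 an infinite sequence of variable words over A such that E is large in 𝐬. Then there exists an infinite extracted subsequence 𝐭 = (t_n(x))_{n=0}^∞ of 𝐬 such that ⟨𝐭⟩_c ⊆ E. -/

import Mathlib

/- Words over an alphabet are `List α`.  The variable symbol `x` is modelled by
`none : Option α`, and variable words are lists over `Option α` containing `none`. -/

namespace HJ

variable {α : Type*}

/-- Substitution of the letter `a` for every occurrence of the variable in a
variable word, producing a constant word. -/
def substC (s : List (Option α)) (a : α) : List α :=
  s.map (fun b => b.getD a)

/-- Substitution of `b ∈ A ∪ {x}` (a letter `some a` or the variable `none`)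
for every occurrence of the variable. -/
def substV (s : List (Option α)) (b : Option α) : List (Option α) :=
  s.map (fun c => Option.elim c b some)

/-- `s` is a variable word over the alphabet `S`: all its letters lie in `S`
and it contains at least one occurrence of the variable. -/
def IsVarWord (S : Set α) (s : List (Option α)) : Prop :=
  (∀ a : α, some a ∈ s → a ∈ S) ∧ none ∈ s

/-- `W(S)`: the set of (constant) words over the alphabet `S`. -/
def WordsOver (S : Set α) : Set (List α) :=
  { w | ∀ a ∈ w, a ∈ S }

/-- The constant span of the sequence `s` of variable words, with indices
restricted to `I` and the letter substituted at position `l i` taken from the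
alphabet `B (l i)`: all concatenations `s_{l_0}(a_0) ⋯ s_{l_n}(a_n)` with
`l_0 < ⋯ < l_n` in `I` and `a_i ∈ B (l_i)`. -/
def constSpan (B : ℕ → Set α) (s : ℕ → List (Option α)) (I : Set ℕ) :
    Set (List α) :=
  { w | ∃ (n : ℕ) (l : Fin (n + 1) → ℕ) (a : Fin (n + 1) → α),
      StrictMono l ∧ (∀ i, l i ∈ I) ∧ (∀ i, a i ∈ B (l i)) ∧
      w = (List.ofFn fun i => substC (s (l i)) (a i)).flatten }

/-- The variable span of the sequence `s` of variable words, with indices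
restricted to `I` and alphabets given by `B`: all concatenations
`s_{l_0}(b_0) ⋯ s_{l_n}(b_n)` with `l_0 < ⋯ < l_n` in `I` and
`b_i ∈ B (l_i) ∪ {x}` which contain at least one occurrence of the variable. -/
def varSpan (B : ℕ → Set α) (s : ℕ → List (Option α)) (I : Set ℕ) :
    Set (List (Option α)) :=
  { w | ∃ (n : ℕ) (l : Fin (n + 1) → ℕ) (b : Fin (n + 1) → Option α),
      StrictMono l ∧ (∀ i, l i ∈ I) ∧
      (∀ i, ∀ a : α, b i = some a → a ∈ B (l i)) ∧
      none ∈ w ∧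
      w = (List.ofFn fun i => substV (s (l i)) (b i)).flatten }

/-- `(t_0, …, t_l)` is a finite extracted subsequence of `s` (with alphabets `B`):
there are `0 = m_0 < m_1 < ⋯` with `t_i` in the variable span of
`(s_n)_{n = m_i}^{m_{i+1} - 1}` (with alphabets `B`) for all `i ≤ l`. -/
def ExtractedFin (B : ℕ → Set α) (s t : ℕ → List (Option α)) (l : ℕ) : Prop :=
  ∃ m : ℕ → ℕ, m 0 = 0 ∧ StrictMono m ∧
    ∀ i ≤ l, t i ∈ varSpan B s (Set.Ico (m i) (m (i + 1)))

/-- `t` is an infinite extracted subsequence of `s` (with alphabets `B`). -/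
def Extracted (B : ℕ → Set α) (s t : ℕ → List (Option α)) : Prop :=
  ∀ l : ℕ, ExtractedFin B s t l

/-- `E` is large in `s` (with alphabets `B`): `E` meets the constant span of
every infinite extracted subsequence of `s`. -/
def IsLarge (B : ℕ → Set α) (E : Set (List α)) (s : ℕ → List (Option α)) : Prop :=
  ∀ w : ℕ → List (Option α), Extracted B s w →
    (E ∩ constSpan B w Set.univ).Nonempty

/-- `E_F = {z ∈ W(S) : w ++ z ∈ E for every w ∈ F}`. -/
def wordQuot (S : Set α) (E F : Set (List α)) : Set (List α) :=
  { z | z ∈ WordsOver S ∧ ∀ w ∈ F, w ++ z ∈ E }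

end HJ

/-!
Concatenation makes variable words a semigroup. The ultrafilters that live on variable words
built from arbitrarily late tails of `s`, and whose images under all substitutions `x ↦ a`,
`a ∈ A`, coincide, form a closed subsemigroup of the Stone–Čech compactification. It is
nonempty by the Hales–Jewett theorem, so it contains an idempotent `U` (Ellis–Numakura). The
common image `W` of `U` under the substitutions is an idempotent ultrafilter on constant words,
and a Galvin–Glazer recursion turns any `C ∈ W` into an extracted subsequence whose constant span
lies in `C`. Since `E` is large, `Eᶜ ∉ W`, hence `E ∈ W`.
-/

attribute [local instance] Ultrafilter.mul Ultrafilter.semigroup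

section GalvinGlazer

variable {M ι : Type*} [Monoid M]

theorem ofFn_prod_mem_of_mul_mem {S : ℕ → Set M} (hS : Antitone S) {x : ℕ → ι → M}
    (hx : ∀ n i, x n i ∈ S n) (hmul : ∀ n i, ∀ y ∈ S (n + 1), x n i * y ∈ S n) :
    ∀ (n : ℕ) (l : Fin (n + 1) → ℕ) (a : Fin (n + 1) → ι), StrictMono l →
      (List.ofFn fun j => x (l j) (a j)).prod ∈ S (l 0)
  | 0, l, a, _ => by simpa using hx (l 0) (a 0)
  | n + 1, l, a, hl => by
    rw [List.ofFn_succ, List.prod_cons]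
    refine hmul _ _ _ (hS (Nat.succ_le_of_lt (hl (Fin.succ_pos 0))) ?_)
    exact ofFn_prod_mem_of_mul_mem hS hx hmul n (fun j => l j.succ) (fun j => a j.succ)
      (hl.comp (Fin.strictMono_succ))

end GalvinGlazer

namespace Ultrafilter

open Filter Set

theorem continuous_map {α β : Type*} (f : α → β) : Continuous (Ultrafilter.map f) :=
  ultrafilterBasis_is_basis.continuous_iff.2 <| forall_mem_range.2 fun s =>
    ultrafilter_isOpen_basic (f ⁻¹' s)

theorem map_mul {M N F : Type*} [Mul M] [Mul N] [FunLike F M N] [MulHomClass F M N] (f : F)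
    (U V : Ultrafilter M) :
    (U * V).map f = U.map f * V.map f :=
  Ultrafilter.coe_inj.mp <| Filter.ext' fun p => by
    simp [Ultrafilter.eventually_mul, Filter.eventually_map]

variable {M ι : Type*} [Monoid M]

theorem exists_seq_ofFn_prod_mem [Finite ι] {W : Ultrafilter M} (hW : W * W = W) {C : Set M}
    (hC : C ∈ W) {T : Type*} (σ : ι → T → M) (Q : ℕ → ℕ → T → Prop)
    (hQ : ∀ m, ∀ S ∈ W, ∃ t K, m < K ∧ Q m K t ∧ ∀ i, σ i t ∈ S) :
    ∃ (t : ℕ → T) (cut : ℕ → ℕ), cut 0 = 0 ∧ StrictMono cut ∧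
      (∀ n, Q (cut n) (cut (n + 1)) (t n)) ∧
      ∀ (n : ℕ) (l : Fin (n + 1) → ℕ) (a : Fin (n + 1) → ι), StrictMono l →
        (List.ofFn fun j => σ (a j) (t (l j))).prod ∈ C := by
  -- Idempotence of `W` gives `{x | x⁻¹ S ∈ W} ∈ W`, so each `σ i t` can also be chosen with
  -- `σ i t * y ∈ S` for `W`-almost all `y`; the next set keeps only those `y`.
  have hstep : ∀ m, ∀ S ∈ W, ∃ t K, m < K ∧ Q m K t ∧
      ∀ i, σ i t ∈ S ∧ {y | σ i t * y ∈ S} ∈ W := by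
    intro m S hS
    have hS' : {x | {y | x * y ∈ S} ∈ W} ∈ W := by rwa [← hW] at hS
    exact hQ m _ (inter_mem hS hS')
  have : Nonempty T := let ⟨t, _⟩ := hQ 0 univ univ_mem; ⟨t⟩
  choose! t K hK using hstep
  let stage : ℕ → ℕ × Set M := fun n =>
    n.rec (0, C) fun _ p => (K p.1 p.2, p.2 ∩ ⋂ i, {y | σ i (t p.1 p.2) * y ∈ p.2})
  have stage_mem : ∀ n, (stage n).2 ∈ W := by
    intro n
    induction n with
    | zero => exact hC
    | succ n ih => exact inter_mem ih (iInter_mem.2 fun i => ((hK _ _ ih).2.2 i).2)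
  have hanti : Antitone fun n => (stage n).2 :=
    antitone_nat_of_succ_le fun n => inter_subset_left
  refine ⟨fun n => t (stage n).1 (stage n).2, fun n => (stage n).1, rfl,
    strictMono_nat_of_lt_succ fun n => (hK _ _ (stage_mem n)).1,
    fun n => (hK _ _ (stage_mem n)).2.1, fun n l a hl => hanti (Nat.zero_le (l 0)) ?_⟩
  exact ofFn_prod_mem_of_mul_mem hanti (fun n i => ((hK _ _ (stage_mem n)).2.2 i).1)
    (fun n i y hy => mem_iInter.1 (inter_subset_right hy) i) n l a hl

end Ultrafilter

namespace HJ

open Filter Set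

variable {α : Type*} {B : ℕ → Set α} {s : ℕ → List (Option α)} {I : Set ℕ}

theorem mem_varSpan_iff {w : List (Option α)} :
    w ∈ varSpan B s I ↔ none ∈ w ∧ ∃ L : List (ℕ × Option α),
      L.Pairwise (·.1 < ·.1) ∧ (∀ p ∈ L, p.1 ∈ I ∧ ∀ a, p.2 = some a → a ∈ B p.1) ∧
      w = (L.map fun p => substV (s p.1) p.2).flatten := by
  constructor
  · rintro ⟨n, l, b, hl, hI, hB, hw, rfl⟩
    refine ⟨hw, List.ofFn fun i => (l i, b i), List.pairwise_ofFn.2 fun i j hij => hl hij,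
      List.forall_mem_ofFn_iff.2 fun i => ⟨hI i, hB i⟩,
      by simp [List.map_ofFn, Function.comp_def]⟩
  · rintro ⟨hw, L, hL, hI, rfl⟩
    obtain ⟨n, hn⟩ : ∃ n, L.length = n + 1 :=
      Nat.exists_eq_add_one.2 (List.length_pos_iff.2 (by rintro rfl; simp at hw))
    obtain ⟨f, rfl⟩ : ∃ f : Fin (n + 1) → ℕ × Option α, L = List.ofFn f :=
      ⟨fun i => L[i.cast hn.symm],
        List.ext_getElem (by simp [hn]) fun i _ _ => by rw [List.getElem_ofFn]; rfl⟩
    rw [List.forall_mem_ofFn_iff] at hI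
    exact ⟨n, fun i => (f i).1, fun i => (f i).2, fun i j hij => List.pairwise_ofFn.1 hL hij,
      fun i => (hI i).1, fun i => (hI i).2, hw, by simp [List.map_ofFn, Function.comp_def]⟩

theorem varSpan_mono {J : Set ℕ} (hIJ : I ⊆ J) : varSpan B s I ⊆ varSpan B s J := by
  rintro w ⟨n, l, b, hl, hI, hb, hw, rfl⟩
  exact ⟨n, l, b, hl, fun i => hIJ (hI i), hb, hw, rfl⟩

theorem exists_lt_mem_varSpan_Ico {m : ℕ} {w : List (Option α)}
    (hw : w ∈ varSpan B s (Ici m)) : ∃ K, m < K ∧ w ∈ varSpan B s (Ico m K) := by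
  obtain ⟨n, l, b, hl, hI, hb, hnone, rfl⟩ := hw
  exact ⟨l (Fin.last n) + 1, Nat.lt_succ_of_le (hI _),
    n, l, b, hl, fun i => ⟨hI i, Nat.lt_succ_of_le (hl.monotone (Fin.le_last i))⟩, hb, hnone,
    rfl⟩

theorem append_mem_varSpan {m K : ℕ} {u v : List (Option α)}
    (hu : u ∈ varSpan B s (Ico m K)) (hv : v ∈ varSpan B s (Ici K)) :
    u ++ v ∈ varSpan B s (Ici m) := by
  obtain ⟨hu, L, hL, hLI, rfl⟩ := mem_varSpan_iff.1 hu
  obtain ⟨-, L', hL', hLI', rfl⟩ := mem_varSpan_iff.1 hv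
  obtain ⟨p₀, hp₀⟩ := List.exists_mem_of_ne_nil L (by rintro rfl; simp at hu)
  have hmK : m ≤ K := (hLI p₀ hp₀).1.1.trans (hLI p₀ hp₀).1.2.le
  refine mem_varSpan_iff.2 ⟨List.mem_append_left _ hu, L ++ L', ?_, ?_, by simp⟩
  · exact List.pairwise_append.2 ⟨hL, hL', fun p hp q hq =>
      (hLI p hp).1.2.trans_le (hLI' q hq).1⟩
  · simp only [List.mem_append]
    rintro p (hp | hp)
    · exact ⟨(hLI p hp).1.1, (hLI p hp).2⟩
    · exact ⟨hmK.trans (hLI' p hp).1, (hLI' p hp).2⟩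

theorem substV_none (w : List (Option α)) : substV w none = w := by
  conv_rhs => rw [← List.map_id w]
  exact List.map_congr_left fun c _ => by cases c <;> rfl

theorem substC_substV (w : List (Option α)) (b : Option α) (a : α) :
    substC (substV w b) a = substC w (b.getD a) := by
  simp only [substC, substV, List.map_map]
  exact List.map_congr_left fun c _ => by cases c <;> cases b <;> rfl

theorem substC_flatten (L : List (List (Option α))) (a : α) :
    substC L.flatten a = (L.map (substC · a)).flatten :=
  List.map_flatten

theorem exists_mem_varSpan_forall_substC_eq {κ : Type*} [Finite κ] (A : Finset α)
    (hs : ∀ n, none ∈ s n) (m : ℕ) (c : List α → κ) :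
    ∃ t ∈ varSpan (fun _ => (A : Set α)) s (Ici m),
      ∀ a ∈ A, ∀ b ∈ A, c (substC t a) = c (substC t b) := by
  obtain ⟨ι, _, hHJ⟩ := Combinatorics.Line.exists_mono_in_high_dimension A κ
  let e := Fintype.equivFin ι
  let word : (ι → A) → List α := fun v =>
    (List.ofFn fun i => substC (s (m + i)) (v (e.symm i))).flatten
  obtain ⟨l, _, hl⟩ := hHJ (c ∘ word)
  let L := List.ofFn fun i => (m + (i : ℕ), (l.idxFun (e.symm i)).map Subtype.val)
  let t := (L.map fun p => substV (s p.1) p.2).flatten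
  have ht : ∀ a (ha : a ∈ A), substC t a = word (l ⟨a, ha⟩) := by
    intro a ha
    simp only [t, L, word, List.map_ofFn, substC_flatten, Function.comp_def, substC_substV,
      Combinatorics.Line.coe_apply]
    congr! 3 with i
    cases l.idxFun (e.symm i) <;> rfl
  refine ⟨t, mem_varSpan_iff.2 ⟨?_, L, ?_, ?_, rfl⟩, fun a ha b hb => ?_⟩
  · obtain ⟨j, hj⟩ := l.proper
    refine List.mem_flatten.2
      ⟨_, List.mem_map_of_mem ((List.mem_ofFn' _ _).2 ⟨e j, rfl⟩), ?_⟩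
    simpa [hj, substV_none] using hs _
  · exact List.pairwise_ofFn.2 fun i j hij => by simpa using hij
  · refine List.forall_mem_ofFn_iff.2 fun i => ⟨Nat.le_add_right m i, fun a ha => ?_⟩
    obtain ⟨b, -, rfl⟩ := Option.map_eq_some_iff.1 ha
    exact b.2
  · rw [ht a ha, ht b hb]
    exact (hl _).trans (hl _).symm

def substHom (a : α) : FreeMonoid (Option α) →* FreeMonoid α :=
  FreeMonoid.map (Option.getD · a)

theorem toList_substHom (a : α) (w : FreeMonoid (Option α)) :
    (substHom a w).toList = substC w.toList a :=
  rfl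

def insensitiveUltrafilters (A : Finset α) (s : ℕ → List (Option α)) :
    Set (Ultrafilter (FreeMonoid (Option α))) :=
  {U | (∀ m, FreeMonoid.toList ⁻¹' varSpan (fun _ => (A : Set α)) s (Ici m) ∈ U) ∧
    ∀ a ∈ A, ∀ b ∈ A, U.map (substHom a) = U.map (substHom b)}

variable {A : Finset α}

theorem isClosed_insensitiveUltrafilters : IsClosed (insensitiveUltrafilters A s) := by
  simp only [insensitiveUltrafilters, ofPred_and, ofPred_forall]
  exact (isClosed_iInter fun m => ultrafilter_isClosed_basic _).inter <|
    isClosed_iInter fun a => isClosed_iInter fun _ => isClosed_iInter fun b =>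
      isClosed_iInter fun _ => isClosed_eq (Ultrafilter.continuous_map _)
        (Ultrafilter.continuous_map _)

theorem mul_mem_insensitiveUltrafilters {U V : Ultrafilter (FreeMonoid (Option α))}
    (hU : U ∈ insensitiveUltrafilters A s) (hV : V ∈ insensitiveUltrafilters A s) :
    U * V ∈ insensitiveUltrafilters A s := by
  refine ⟨fun m => ?_, fun a ha b hb => ?_⟩
  · rw [← Ultrafilter.mem_coe, ← Filter.eventually_mem_set, Ultrafilter.eventually_mul]
    filter_upwards [hU.1 m] with u hu
    obtain ⟨K, -, huK⟩ := exists_lt_mem_varSpan_Ico (mem_preimage.1 hu)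
    filter_upwards [hV.1 K] with v hv
    rw [mem_preimage, FreeMonoid.toList_mul]
    exact append_mem_varSpan huK hv
  · rw [Ultrafilter.map_mul, Ultrafilter.map_mul, hU.2 a ha b hb, hV.2 a ha b hb]

theorem insensitiveUltrafilters_nonempty (hs : ∀ n, none ∈ s n) :
    (insensitiveUltrafilters A s).Nonempty := by
  classical
  let F : ℕ × Finset (Set (FreeMonoid α)) → Set (FreeMonoid (Option α)) := fun p =>
    FreeMonoid.toList ⁻¹' varSpan (fun _ => (A : Set α)) s (Ici p.1) ∩
      ⋂ D ∈ p.2, {t | ∀ a ∈ A, ∀ b ∈ A, substHom a t ∈ D ↔ substHom b t ∈ D}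
  have hF : Antitone F := fun p q hpq =>
    inter_subset_inter (preimage_mono (varSpan_mono (Ici_subset_Ici.2 hpq.1)))
      (biInter_subset_biInter_left hpq.2)
  have hne : ∀ p, (F p).Nonempty := by
    rintro ⟨m, Ds⟩
    obtain ⟨t, ht, hc⟩ := exists_mem_varSpan_forall_substC_eq A hs m
      fun w (D : Ds) => FreeMonoid.ofList w ∈ (D : Set (FreeMonoid α))
    refine ⟨FreeMonoid.ofList t, ht, mem_iInter₂.2 fun D hD a ha b hb => ?_⟩
    exact iff_of_eq (congrFun (hc a ha b hb) ⟨D, hD⟩)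
  have : NeBot (⨅ p, 𝓟 (F p)) :=
    iInf_neBot_of_directed' (Antitone.directed_ge fun _ _ h => principal_mono.2 (hF h))
      fun p => principal_neBot_iff.2 (hne p)
  let U := Ultrafilter.of (⨅ p, 𝓟 (F p))
  have hU : ∀ p, F p ∈ U := fun p =>
    Ultrafilter.of_le _ (mem_iInf_of_mem p (mem_principal_self _))
  refine ⟨U, fun m => mem_of_superset (hU (m, ∅)) inter_subset_left, fun a ha b hb => ?_⟩
  refine Ultrafilter.ext fun D => ?_
  simp only [Ultrafilter.mem_map]
  have hD : {t | ∀ a ∈ A, ∀ b ∈ A, substHom a t ∈ D ↔ substHom b t ∈ D} ∈ U :=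
    mem_of_superset (hU (0, {D})) (by simp [F])
  exact ⟨fun h => mem_of_superset (inter_mem h hD) fun t ht => (ht.2 a ha b hb).1 ht.1,
    fun h => mem_of_superset (inter_mem h hD) fun t ht => (ht.2 a ha b hb).2 ht.1⟩

theorem exists_idempotent_mem_insensitiveUltrafilters (hs : ∀ n, none ∈ s n) :
    ∃ U ∈ insensitiveUltrafilters A s, U * U = U :=
  exists_idempotent_in_compact_subsemigroup Ultrafilter.continuous_mul_left _
    (insensitiveUltrafilters_nonempty hs) isClosed_insensitiveUltrafilters.isCompact
    fun _ hU _ hV => mul_mem_insensitiveUltrafilters hU hV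

theorem exists_extracted_constSpan_subset {U : Ultrafilter (FreeMonoid (Option α))}
    (hU : U ∈ insensitiveUltrafilters A s) (hUU : U * U = U) {a₀ : α} (ha₀ : a₀ ∈ A)
    {C : Set (List α)} (hC : FreeMonoid.toList ⁻¹' C ∈ U.map (substHom a₀)) :
    ∃ t, Extracted (fun _ => (A : Set α)) s t ∧
      constSpan (fun _ => (A : Set α)) t univ ⊆ C := by
  have hW : U.map (substHom a₀) * U.map (substHom a₀) = U.map (substHom a₀) := by
    rw [← Ultrafilter.map_mul, hUU]
  have hstep : ∀ m, ∀ S ∈ U.map (substHom a₀), ∃ (t : FreeMonoid (Option α)) (K : ℕ),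
      m < K ∧ t.toList ∈ varSpan (fun _ => (A : Set α)) s (Ico m K) ∧
        ∀ a : A, substHom (a : α) t ∈ S := by
    intro m S hS
    have hS' : ∀ a : A, substHom (a : α) ⁻¹' S ∈ U := fun a => by
      rw [← Ultrafilter.mem_map, hU.2 a a.2 a₀ ha₀]
      exact hS
    obtain ⟨t, ht, htS⟩ := Ultrafilter.nonempty_of_mem (inter_mem (hU.1 m) (iInter_mem.2 hS'))
    obtain ⟨K, hK, htK⟩ := exists_lt_mem_varSpan_Ico (mem_preimage.1 ht)
    exact ⟨t, K, hK, htK, mem_iInter.1 htS⟩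
  obtain ⟨t, cut, hcut0, hcut, ht, hprod⟩ :=
    Ultrafilter.exists_seq_ofFn_prod_mem hW hC (fun a : A => substHom (a : α)) _ hstep
  refine ⟨fun n => (t n).toList, fun _ => ⟨cut, hcut0, hcut, fun n _ => ht n⟩, ?_⟩
  rintro _ ⟨n, l, a, hl, -, ha, rfl⟩
  simpa [FreeMonoid.toList_prod, List.map_ofFn, Function.comp_def, toList_substHom]
    using hprod n l (fun j => ⟨a j, ha j⟩) hl

end HJ

open HJ in
theorem stmt9_general {α : Type*} (A : Finset α) (hA : A.Nonempty)
    (E : Set (List α))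
    (s : ℕ → List (Option α)) (hs : ∀ n, IsVarWord (A : Set α) (s n))
    (hlarge : IsLarge (fun _ => (A : Set α)) E s) :
    ∃ t : ℕ → List (Option α),
      Extracted (fun _ => (A : Set α)) s t ∧
      constSpan (fun _ => (A : Set α)) t Set.univ ⊆ E := by
  obtain ⟨U, hU, hUU⟩ :=
    exists_idempotent_mem_insensitiveUltrafilters (A := A) fun n => (hs n).2
  obtain ⟨a₀, ha₀⟩ := hA
  by_cases hE : FreeMonoid.toList ⁻¹' E ∈ U.map (substHom a₀)
  · exact exists_extracted_constSpan_subset hU hUU ha₀ hE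
  · obtain ⟨t, ht, htE⟩ := exists_extracted_constSpan_subset hU hUU ha₀ (C := Eᶜ)
      (Ultrafilter.compl_mem_iff_notMem.2 hE)
    obtain ⟨w, hwE, hw⟩ := hlarge t ht
    exact absurd hwE (htE hw)

open HJ in
/-- Corollary 2.12: a large set contains the constant span of some extracted
subsequence. -/
theorem stmt9 {α : Type*} (A : Finset α) (hA : A.Nonempty)
    (E : Set (List α)) (hE : E ⊆ WordsOver (A : Set α))
    (s : ℕ → List (Option α)) (hs : ∀ n, IsVarWord (A : Set α) (s n))
    (hlarge : IsLarge (fun _ => (A : Set α)) E s) :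
    ∃ t : ℕ → List (Option α),
      Extracted (fun _ => (A : Set α)) s t ∧
      constSpan (fun _ => (A : Set α)) t Set.univ ⊆ E :=
  stmt9_general A hA E s hs hlarge
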